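/- arXiv:math/0505072 — 6 statements merged into one kernel-verified Lean document; each statement's English description precedes it below -/
import Mathlib

section
/- Let k be an algebraically closed field of characteristic 0 and d = 2m even with m ≥ 1. Suppose h₁ = Σ_{i=0}^{m-1} ηᵢ x^{m-i-1} y^i is a nonzero binary form of degree m-1, and fix a nonzero binary form h₂ of degree m-1. Then every μ ∈ k for which there exist nonzero α, β ∈ k and a binary form h of degree m-1 with α x^{m+1} h₁ + β y^{m+1} h₂ = (μx + y)^{m+1} h satisfies Σ_{i=0}^{m-1} (-1)^i ((2m-i)!/(m-i)!) ηᵢ μ^i = 0; in particular the set of such μ is finite. -/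
open MvPolynomial Finset
section helpers

variable {k : Type*} [CommRing k]

lemma iter_pderiv_add (i : Fin 2) (j : ℕ) (p q : MvPolynomial (Fin 2) k) :
    (pderiv i)^[j] (p + q) = (pderiv i)^[j] p + (pderiv i)^[j] q := by
  induction j generalizing p q with
  | zero => simp
  | succ j ih => simp [Function.iterate_succ_apply, map_add, ih]

lemma iter_pderiv_sum {ι : Type*} (i : Fin 2) (j : ℕ) (t : Finset ι)
    (f : ι → MvPolynomial (Fin 2) k) :
    (pderiv i)^[j] (∑ x ∈ t, f x) = ∑ x ∈ t, (pderiv i)^[j] (f x) := by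
  induction j with
  | zero => simp
  | succ j ih => rw [Function.iterate_succ_apply', ih, map_sum]; simp [Function.iterate_succ_apply']

lemma iter_pderiv_monomial (j : ℕ) (s : Fin 2 →₀ ℕ) (a : k) :
    (pderiv (0 : Fin 2))^[j] (monomial s a) =
      monomial (s - Finsupp.single 0 j) (a * ((s 0).descFactorial j : k)) := by
  induction j with
  | zero => simp
  | succ j ih =>
    rw [Function.iterate_succ_apply', ih, pderiv_monomial]
    have hs : s - Finsupp.single 0 j - Finsupp.single (0 : Fin 2) 1
        = s - Finsupp.single 0 (j + 1) := by
      ext x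
      rw [Finsupp.tsub_apply, Finsupp.tsub_apply, Finsupp.tsub_apply]
      fin_cases x <;> simp [Finsupp.single_apply] <;> omega
    have hc : ((s - Finsupp.single 0 j : Fin 2 →₀ ℕ)) 0 = s 0 - j := by
      simp [Finsupp.tsub_apply]
    rw [hs, hc, Nat.descFactorial_succ]
    congr 1
    push_cast [Nat.cast_mul]
    ring

lemma mon_eq (p q : ℕ) (a : k) :
    C a * X 0 ^ p * X 1 ^ q
      = (monomial (Finsupp.single 0 p + Finsupp.single 1 q) a : MvPolynomial (Fin 2) k) := by
  rw [X_pow_eq_monomial, X_pow_eq_monomial, C_apply, monomial_mul, monomial_mul,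
    mul_one, mul_one, zero_add]

lemma iter_pderiv_term (j p q : ℕ) (a : k) :
    (pderiv (0 : Fin 2))^[j] (C a * X 0 ^ p * X 1 ^ q)
      = C (a * (p.descFactorial j : k)) * X 0 ^ (p - j) * X 1 ^ q := by
  rw [mon_eq, iter_pderiv_monomial, mon_eq]
  have h1 : ((Finsupp.single 0 p + Finsupp.single 1 q : Fin 2 →₀ ℕ)) 0 = p := by
    simp [Finsupp.single_apply]
  have h2 : (Finsupp.single 0 p + Finsupp.single 1 q : Fin 2 →₀ ℕ) - Finsupp.single 0 j
      = Finsupp.single 0 (p - j) + Finsupp.single 1 q := by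
    ext x
    rw [Finsupp.tsub_apply]
    fin_cases x <;> simp [Finsupp.single_apply]
  rw [h1, h2]

lemma iter_pderiv_C_X1_mul (j n : ℕ) (b : k) (p : MvPolynomial (Fin 2) k) :
    (pderiv (0 : Fin 2))^[j] (C b * X 1 ^ n * p)
      = C b * X 1 ^ n * (pderiv (0 : Fin 2))^[j] p := by
  have h0 : pderiv (0 : Fin 2) (C b * X 1 ^ n) = 0 := by
    rw [pderiv_C_mul, pderiv_pow, pderiv_X_of_ne (by decide : (1 : Fin 2) ≠ 0)]
    ring
  induction j generalizing p with
  | zero => simp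
  | succ j ih =>
    rw [Function.iterate_succ_apply, Function.iterate_succ_apply, pderiv_mul, h0, zero_mul,
      zero_add, ih]

lemma iter_pderiv_of_low (j : ℕ) (p : MvPolynomial (Fin 2) k) (n : ℕ)
    (hp : p.IsHomogeneous n) (hn : n < j) : (pderiv (0 : Fin 2))^[j] p = 0 := by
  conv_lhs => rw [p.as_sum]
  rw [iter_pderiv_sum]
  refine Finset.sum_eq_zero fun s hs => ?_
  rw [iter_pderiv_monomial]
  have h1 : s 0 < j := by
    have h2 : (s.sum fun _ e => e) ≤ p.totalDegree := le_totalDegree hs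
    have h3 : p.totalDegree ≤ n := hp.totalDegree_le
    have h4 : s 0 ≤ s.sum fun _ e => e := by
      by_cases h : (0 : Fin 2) ∈ s.support
      · exact Finset.single_le_sum (fun _ _ => Nat.zero_le _) h
      · simp [Finsupp.notMem_support_iff.mp h]
    omega
  rw [Nat.descFactorial_eq_zero_iff_lt.mpr h1]
  simp

lemma iter_pderiv_g_pow (μ : k) : ∀ (j n : ℕ), j ≤ n → ∀ h : MvPolynomial (Fin 2) k,
    ∃ h' : MvPolynomial (Fin 2) k,
      (pderiv (0 : Fin 2))^[j] ((C μ * X 0 + X 1) ^ (n + 1) * h)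
        = (C μ * X 0 + X 1) ^ (n + 1 - j) * h' := by
  intro j
  induction j with
  | zero => intro n _ h; exact ⟨h, by simp⟩
  | succ j ih =>
    intro n hj h
    obtain ⟨n', rfl⟩ : ∃ n', n = n' + 1 := ⟨n - 1, by omega⟩
    set g : MvPolynomial (Fin 2) k := C μ * X 0 + X 1 with hg
    have hdg : pderiv (0 : Fin 2) g = C μ := by
      rw [hg, map_add, pderiv_C_mul, pderiv_X_self,
        pderiv_X_of_ne (by decide : (1 : Fin 2) ≠ 0)]
      ring
    have key : pderiv (0 : Fin 2) (g ^ (n' + 1 + 1) * h)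
        = g ^ (n' + 1) * (((n' + 2 : ℕ) : MvPolynomial (Fin 2) k) * C μ * h
            + g * pderiv (0 : Fin 2) h) := by
      rw [pderiv_mul, pderiv_pow, hdg]
      simp only [Nat.add_sub_cancel]
      push_cast
      ring
    rw [Function.iterate_succ_apply, key]
    obtain ⟨h', hh'⟩ := ih n' (by omega) _
    have hexp : n' + 1 + 1 - (j + 1) = n' + 1 - j := by omega
    exact ⟨h', by rw [hexp, hh']⟩

end helpers


/-- (even case `d = 2m`) Let `k` be algebraically closed of characteristic 0,
`m ≥ 1`, and `h₁ = Σ_{i<m} ηᵢ x^{m-i-1} y^i` a nonzero binary form of degree `m-1`; fix a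
nonzero binary form `h₂` of degree `m-1`. Every `μ ∈ k` for which there are nonzero
`α, β ∈ k` and a binary form `h` of degree `m-1` with
`α x^{m+1} h₁ + β y^{m+1} h₂ = (μx + y)^{m+1} h` satisfies
`Σ_{i<m} (-1)^i ((2m-i)!/(m-i)!) ηᵢ μ^i = 0`; in particular the set of such `μ` is
finite. -/
theorem stmt_6 (k : Type*) [Field k] [IsAlgClosed k] [CharZero k] (m : ℕ) (hm : 1 ≤ m)
    (η : ℕ → k)
    (h₁ : MvPolynomial (Fin 2) k)
    (hh₁def : h₁ = ∑ i ∈ range m, C (η i) * X 0 ^ (m - i - 1) * X 1 ^ i)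
    (hh₁ : h₁ ≠ 0)
    (h₂ : MvPolynomial (Fin 2) k) (hh₂ : h₂.IsHomogeneous (m - 1)) (hh₂0 : h₂ ≠ 0) :
    (∀ μ ∈ {μ : k | ∃ α β : k, α ≠ 0 ∧ β ≠ 0 ∧ ∃ h : MvPolynomial (Fin 2) k,
        h.IsHomogeneous (m - 1) ∧
        C α * X 0 ^ (m + 1) * h₁ + C β * X 1 ^ (m + 1) * h₂ =
          (C μ * X 0 + X 1) ^ (m + 1) * h},
      ∑ i ∈ range m, (-1 : k) ^ i * ((2 * m - i).descFactorial m : k) * η i * μ ^ i = 0) ∧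
    {μ : k | ∃ α β : k, α ≠ 0 ∧ β ≠ 0 ∧ ∃ h : MvPolynomial (Fin 2) k,
        h.IsHomogeneous (m - 1) ∧
        C α * X 0 ^ (m + 1) * h₁ + C β * X 1 ^ (m + 1) * h₂ =
          (C μ * X 0 + X 1) ^ (m + 1) * h}.Finite := by
  have hmain : ∀ μ ∈ {μ : k | ∃ α β : k, α ≠ 0 ∧ β ≠ 0 ∧ ∃ h : MvPolynomial (Fin 2) k,
        h.IsHomogeneous (m - 1) ∧
        C α * X 0 ^ (m + 1) * h₁ + C β * X 1 ^ (m + 1) * h₂ =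
          (C μ * X 0 + X 1) ^ (m + 1) * h},
      ∑ i ∈ range m, (-1 : k) ^ i * ((2 * m - i).descFactorial m : k) * η i * μ ^ i = 0 := by
    intro μ hμ
    obtain ⟨α, β, hα, hβ, h, hhom, heq⟩ := hμ
    set f : Fin 2 → k := ![1, -μ] with hf
    have e1 : C α * X 0 ^ (m + 1) * h₁
        = ∑ i ∈ range m, C (α * η i) * X 0 ^ (2 * m - i) * X 1 ^ i := by
      rw [hh₁def, Finset.mul_sum]
      refine Finset.sum_congr rfl fun i hi => ?_
      have hi' : 2 * m - i = (m + 1) + (m - i - 1) := by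
        have := Finset.mem_range.mp hi; omega
      rw [hi', pow_add, C_mul]; ring
    have hL : eval f ((pderiv (0 : Fin 2))^[m]
          (C α * X 0 ^ (m + 1) * h₁ + C β * X 1 ^ (m + 1) * h₂))
        = α * ∑ i ∈ range m,
            (-1 : k) ^ i * ((2 * m - i).descFactorial m : k) * η i * μ ^ i := by
      rw [iter_pderiv_add, iter_pderiv_C_X1_mul,
        iter_pderiv_of_low m h₂ (m - 1) hh₂ (by omega), mul_zero, add_zero, e1,
        iter_pderiv_sum, map_sum, Finset.mul_sum]
      refine Finset.sum_congr rfl fun i hi => ?_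
      rw [iter_pderiv_term]
      simp only [map_mul, map_pow, eval_C, eval_X, hf, Matrix.cons_val_zero,
        Matrix.cons_val_one, Matrix.head_cons, one_pow]
      rw [neg_pow]
      ring
    have hR : eval f ((pderiv (0 : Fin 2))^[m] ((C μ * X 0 + X 1) ^ (m + 1) * h)) = 0 := by
      obtain ⟨h', hr⟩ := iter_pderiv_g_pow μ m m le_rfl h
      rw [hr, map_mul, map_pow]
      have hg0 : eval f (C μ * X 0 + X 1) = 0 := by
        rw [map_add, map_mul, eval_C, eval_X, eval_X]
        simp [hf]
      rw [hg0, zero_pow (by omega : m + 1 - m ≠ 0), zero_mul]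
    have happ := congrArg (fun p : MvPolynomial (Fin 2) k =>
      eval f ((pderiv (0 : Fin 2))^[m] p)) heq
    rw [hL, hR] at happ
    exact (mul_eq_zero.mp happ).resolve_left hα
  refine ⟨hmain, ?_⟩
  have hex : ∃ i, i < m ∧ η i ≠ 0 := by
    by_contra hc
    push_neg at hc
    apply hh₁
    rw [hh₁def]
    refine Finset.sum_eq_zero fun i hi => ?_
    rw [hc i (Finset.mem_range.mp hi), map_zero, zero_mul, zero_mul]
  obtain ⟨i₀, hi₀m, hi₀0⟩ := hex
  set q : Polynomial k := ∑ i ∈ range m,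
      Polynomial.C ((-1 : k) ^ i * ((2 * m - i).descFactorial m : k) * η i)
        * Polynomial.X ^ i with hq
  have hcoeff : q.coeff i₀
      = (-1 : k) ^ i₀ * ((2 * m - i₀).descFactorial m : k) * η i₀ := by
    rw [hq, Polynomial.finset_sum_coeff]
    simp only [Polynomial.coeff_C_mul, Polynomial.coeff_X_pow, mul_ite, mul_one, mul_zero]
    rw [Finset.sum_ite_eq (range m)]
    exact if_pos (Finset.mem_range.mpr hi₀m)
  have hd : ((2 * m - i₀).descFactorial m : k) ≠ 0 := by
    rw [Nat.cast_ne_zero, Ne, Nat.descFactorial_eq_zero_iff_lt]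
    omega
  have hq0 : q ≠ 0 := by
    intro hq0'
    rw [hq0', Polynomial.coeff_zero] at hcoeff
    have h1 : (-1 : k) ^ i₀ * ((2 * m - i₀).descFactorial m : k) * η i₀ = 0 := hcoeff.symm
    rcases mul_eq_zero.mp h1 with h2 | h2
    · rcases mul_eq_zero.mp h2 with h3 | h3
      · exact (pow_ne_zero i₀ (neg_ne_zero.mpr one_ne_zero)) h3
      · exact hd h3
    · exact hi₀0 h2
  refine Set.Finite.subset (q.finite_setOf_isRoot hq0) ?_
  intro μ hμ
  have := hmain μ hμ
  simp only [Set.mem_setOf_eq, Polynomial.IsRoot.def]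
  rw [hq, Polynomial.eval_finset_sum]
  simpa only [Polynomial.eval_mul, Polynomial.eval_C, Polynomial.eval_pow,
    Polynomial.eval_X] using this
end

section
/- Let G be a finite group acting on a finite dimensional vector space V over an algebraically closed field k of characteristic 0, and let n ∈ ℕ. Then the algebra of invariants k[V^{⊕n}]^G (for the diagonal action) is integral over the subalgebra pol_n k[V]^G generated by all polarizations of G-invariant polynomials on V. -/
open MvPolynomial

/-- A polynomial `f ∈ k[V]` (`V = k^m`, coordinates indexed by `Fin m`) is `G`-invariant
for the linear action given by `ρ`. -/
def InvV (k : Type*) [Field k] {G : Type*} [Group G] {m : ℕ}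
    (ρ : G →* ((Fin m → k) ≃ₗ[k] (Fin m → k))) (f : MvPolynomial (Fin m) k) : Prop :=
  ∀ (g : G) (v : Fin m → k), eval (ρ g v) f = eval v f

/-- A polynomial `F ∈ k[V^{⊕n}]` is `G`-invariant for the diagonal action. -/
def InvVn (k : Type*) [Field k] {G : Type*} [Group G] {m : ℕ}
    (ρ : G →* ((Fin m → k) ≃ₗ[k] (Fin m → k))) (n : ℕ)
    (F : MvPolynomial (Fin n × Fin m) k) : Prop :=
  ∀ (g : G) (v : Fin n → Fin m → k),
    eval (fun p : Fin n × Fin m => ρ g (v p.1) p.2) F =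
      eval (fun p : Fin n × Fin m => v p.1 p.2) F

/-- The polarization of `f ∈ k[V]` of multidegree `δ : Fin n → ℕ`: the multihomogeneous
component of multidegree `δ` (in the `n` groups of variables) of
`f(v₁ + ⋯ + vₙ)`, i.e. the coefficient of `x₁^{δ₁}⋯xₙ^{δₙ}` in `f(x₁v₁ + ⋯ + xₙvₙ)`. -/
noncomputable def polarization (k : Type*) [Field k] {m : ℕ} (n : ℕ) (δ : Fin n → ℕ)
    (f : MvPolynomial (Fin m) k) : MvPolynomial (Fin n × Fin m) k :=
  weightedHomogeneousComponent
    (fun p : Fin n × Fin m => (Pi.single p.1 1 : Fin n → ℕ)) δ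
    (aeval (fun i : Fin m => ∑ j : Fin n, (X (j, i) : MvPolynomial (Fin n × Fin m) k)) f)

section Aux

variable {k : Type*} [Field k] {G : Type*} [Group G] {m : ℕ}

/-- The (right) action of `g` on polynomials: `(tauPol ρ g f)(v) = f (ρ g v)`. -/
noncomputable def tauPol (ρ : G →* ((Fin m → k) ≃ₗ[k] (Fin m → k))) (g : G) :
    MvPolynomial (Fin m) k →ₐ[k] MvPolynomial (Fin m) k :=
  aeval (fun i => ∑ i' : Fin m,
    C (ρ g (fun j => if i' = j then (1 : k) else 0) i) * X i')

lemma eval_tauPol (ρ : G →* ((Fin m → k) ≃ₗ[k] (Fin m → k))) (g : G) (v : Fin m → k)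
    (f : MvPolynomial (Fin m) k) : eval v (tauPol ρ g f) = eval (ρ g v) f := by
  have h0 : eval v (tauPol ρ g f)
      = eval₂ ((eval v : MvPolynomial (Fin m) k →+* k).comp (algebraMap k _))
          ((eval v : MvPolynomial (Fin m) k →+* k) ∘ (fun i => ∑ i' : Fin m,
            C (ρ g (fun j => if i' = j then (1 : k) else 0) i) * X i')) f := by
    rw [tauPol, aeval_def, eval₂_comp_left (eval v)]
  rw [h0]
  have h1 : ((eval v : MvPolynomial (Fin m) k →+* k).comp (algebraMap k _))
      = RingHom.id k := by
    ext a
    simp [MvPolynomial.algebraMap_eq]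
  rw [h1, eval₂_id]
  have h2 : ((eval v : MvPolynomial (Fin m) k →+* k) ∘ (fun i => ∑ i' : Fin m,
      C (ρ g (fun j => if i' = j then (1 : k) else 0) i) * X i')) = ρ g v := by
    funext i
    have hv : ρ g v = ∑ i' : Fin m, v i' • (ρ g fun j => if i' = j then (1 : k) else 0) := by
      conv_lhs => rw [pi_eq_sum_univ v]
      rw [map_sum]
      simp only [map_smul]
    simp only [Function.comp_apply, map_sum, map_mul, eval_C, eval_X]
    rw [hv, Finset.sum_apply]
    simp [mul_comm]
  rw [h2]

/-- Every polynomial is a root of a monic polynomial whose coefficients are invariants. -/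
lemma exists_integral_poly [Fintype G] [Infinite k]
    (ρ : G →* ((Fin m → k) ≃ₗ[k] (Fin m → k))) (h : MvPolynomial (Fin m) k) :
    ∃ Q : Polynomial (MvPolynomial (Fin m) k),
      Q.Monic ∧ (∀ r, InvV k ρ (Q.coeff r)) ∧ Q.eval h = 0 := by
  refine ⟨∏ g : G, (Polynomial.X - Polynomial.C (tauPol ρ g h)), ?_, ?_, ?_⟩
  · exact Polynomial.monic_prod_of_monic _ _ fun g _ => Polynomial.monic_X_sub_C _
  · intro r g v
    have hmap : ∀ u : Fin m → k,
        (∏ g' : G, (Polynomial.X - Polynomial.C (tauPol ρ g' h))).map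
            (eval u : MvPolynomial (Fin m) k →+* k)
          = ∏ g' : G, (Polynomial.X - Polynomial.C (eval (ρ g' u) h)) := by
      intro u
      rw [Polynomial.map_prod]
      refine Finset.prod_congr rfl fun g' _ => ?_
      rw [Polynomial.map_sub, Polynomial.map_X, Polynomial.map_C, eval_tauPol]
    have key : (∏ g' : G, (Polynomial.X - Polynomial.C (tauPol ρ g' h))).map
          (eval (ρ g v) : MvPolynomial (Fin m) k →+* k)
        = (∏ g' : G, (Polynomial.X - Polynomial.C (tauPol ρ g' h))).map
          (eval v : MvPolynomial (Fin m) k →+* k) := by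
      rw [hmap, hmap,
        ← Equiv.prod_comp (Equiv.mulRight g)
          (fun g' => Polynomial.X - Polynomial.C (eval (ρ g' v) h))]
      refine Finset.prod_congr rfl fun g' _ => ?_
      have hρ : ρ g' (ρ g v) = ρ (g' * g) v := by
        rw [map_mul]; rfl
      simp only [Equiv.coe_mulRight, hρ]
    have := congrArg (fun p => Polynomial.coeff p r) key
    simpa only [Polynomial.coeff_map] using this
  · rw [Polynomial.eval_prod]
    apply Finset.prod_eq_zero (Finset.mem_univ (1 : G))
    have h1 : tauPol ρ 1 h = h := by
      apply MvPolynomial.funext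
      intro v
      rw [eval_tauPol, map_one]
      rfl
    simp [h1]

variable {n : ℕ}

lemma phi_aux_monomial (j : Fin n) (d : (Fin n × Fin m) →₀ ℕ) (c : k) :
    aeval (fun p : Fin n × Fin m =>
        if p.1 = j then (X p : MvPolynomial (Fin n × Fin m) k) else 0)
      (monomial d c)
    = if ∀ p ∈ d.support, p.1 = j then (monomial d c : MvPolynomial (Fin n × Fin m) k)
      else 0 := by
  classical
  rw [monomial_eq, map_mul]
  have hC : (aeval (fun p : Fin n × Fin m =>
      if p.1 = j then (X p : MvPolynomial (Fin n × Fin m) k) else 0)) (C c)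
      = (C c : MvPolynomial (Fin n × Fin m) k) := by
    rw [aeval_C, MvPolynomial.algebraMap_eq]
  rw [hC]
  by_cases hd : ∀ p ∈ d.support, p.1 = j
  · rw [if_pos hd]
    congr 1
    simp only [Finsupp.prod]
    rw [map_prod]
    refine Finset.prod_congr rfl fun p hp => ?_
    rw [map_pow, aeval_X, if_pos (hd p hp)]
  · rw [if_neg hd]
    push_neg at hd
    obtain ⟨p₀, hp₀, hne⟩ := hd
    have hzero : (aeval (fun p : Fin n × Fin m =>
        if p.1 = j then (X p : MvPolynomial (Fin n × Fin m) k) else 0)) ((X p₀ : MvPolynomial (Fin n × Fin m) k) ^ d p₀) = 0 := by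
      rw [map_pow, aeval_X, if_neg hne]
      exact zero_pow (Finsupp.mem_support_iff.mp hp₀)
    simp only [Finsupp.prod]
    rw [map_prod, Finset.prod_eq_zero hp₀ hzero, mul_zero]

lemma weight_eval (d : (Fin n × Fin m) →₀ ℕ) (j' : Fin n) :
    (Finsupp.weight (fun p : Fin n × Fin m => (Pi.single p.1 1 : Fin n → ℕ)) d) j'
      = ∑ p ∈ d.support, d p * (Pi.single p.1 1 : Fin n → ℕ) j' := by
  rw [Finsupp.weight_apply, Finsupp.sum, Finset.sum_apply]
  simp [Pi.smul_apply, smul_eq_mul]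

lemma phi_component (j : Fin n) (δ : Fin n → ℕ) (P : MvPolynomial (Fin n × Fin m) k) :
    aeval (fun p : Fin n × Fin m =>
        if p.1 = j then (X p : MvPolynomial (Fin n × Fin m) k) else 0)
      (weightedHomogeneousComponent
        (fun p : Fin n × Fin m => (Pi.single p.1 1 : Fin n → ℕ)) δ P)
    = weightedHomogeneousComponent
        (fun p : Fin n × Fin m => (Pi.single p.1 1 : Fin n → ℕ)) δ P
    ∨ aeval (fun p : Fin n × Fin m =>
        if p.1 = j then (X p : MvPolynomial (Fin n × Fin m) k) else 0)
      (weightedHomogeneousComponent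
        (fun p : Fin n × Fin m => (Pi.single p.1 1 : Fin n → ℕ)) δ P)
    = 0 := by
  classical
  set w := fun p : Fin n × Fin m => (Pi.single p.1 1 : Fin n → ℕ) with hw
  by_cases hδ : ∀ j' ≠ j, δ j' = 0
  · left
    rw [weightedHomogeneousComponent_apply, map_sum]
    refine Finset.sum_congr rfl fun d hd => ?_
    rw [Finset.mem_filter] at hd
    rw [phi_aux_monomial, if_pos]
    intro p hp
    by_contra hne
    have hpos : 0 < d p := Nat.pos_of_ne_zero (Finsupp.mem_support_iff.mp hp)
    have hle : d p ≤ (Finsupp.weight w d) p.1 := by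
      rw [hw, weight_eval]
      have h2 := Finset.single_le_sum
        (f := fun q => d q * (Pi.single q.1 1 : Fin n → ℕ) p.1)
        (fun q _ => Nat.zero_le _) hp
      simpa [Pi.single_eq_same] using h2
    rw [hd.2, hδ p.1 hne] at hle
    omega
  · right
    push_neg at hδ
    obtain ⟨j₁, hj₁ne, hj₁⟩ := hδ
    rw [weightedHomogeneousComponent_apply, map_sum]
    refine Finset.sum_eq_zero fun d hd => ?_
    rw [Finset.mem_filter] at hd
    rw [phi_aux_monomial, if_neg]
    intro hall
    apply hj₁
    rw [← hd.2, hw, weight_eval]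
    refine Finset.sum_eq_zero fun p hp => ?_
    rw [hall p hp, Pi.single_eq_of_ne hj₁ne, mul_zero]

/-- The image of an invariant under the `j`-th coordinate embedding lies in the algebra
generated by polarizations. -/
lemma aevalj_mem (ρ : G →* ((Fin m → k) ≃ₗ[k] (Fin m → k))) (j : Fin n)
    (f : MvPolynomial (Fin m) k) (hf : InvV k ρ f) :
    aeval (fun i : Fin m => (X (j, i) : MvPolynomial (Fin n × Fin m) k)) f
      ∈ Algebra.adjoin k
        {P : MvPolynomial (Fin n × Fin m) k |
          ∃ (f : MvPolynomial (Fin m) k) (δ : Fin n → ℕ),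
            InvV k ρ f ∧ P = polarization k n δ f} := by
  classical
  set w := fun p : Fin n × Fin m => (Pi.single p.1 1 : Fin n → ℕ) with hw
  set Af := aeval (fun i : Fin m =>
    ∑ j' : Fin n, (X (j', i) : MvPolynomial (Fin n × Fin m) k)) f with hAf
  have h1 : aeval (fun i : Fin m => (X (j, i) : MvPolynomial (Fin n × Fin m) k)) f
      = aeval (fun p : Fin n × Fin m =>
          if p.1 = j then (X p : MvPolynomial (Fin n × Fin m) k) else 0) Af := by
    rw [hAf, comp_aeval_apply]
    refine congrArg (fun s : Fin m → MvPolynomial (Fin n × Fin m) k => aeval s f) ?_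
    funext i
    rw [map_sum]
    simp only [aeval_X]
    simp [Finset.sum_ite_eq']
  have hfin := weightedHomogeneousComponent_finsupp (w := w) Af
  have hsum : (aeval (fun p : Fin n × Fin m =>
        if p.1 = j then (X p : MvPolynomial (Fin n × Fin m) k) else 0)) Af
      = ∑ δ ∈ hfin.toFinset, (aeval (fun p : Fin n × Fin m =>
          if p.1 = j then (X p : MvPolynomial (Fin n × Fin m) k) else 0))
          ((weightedHomogeneousComponent w δ) Af) := by
    conv_lhs => rw [← sum_weightedHomogeneousComponent w Af, finsum_eq_sum _ hfin]
    rw [map_sum]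
  rw [h1, hsum]
  apply Subalgebra.sum_mem
  intro δ _
  rcases phi_component j δ Af with h | h
  · rw [h]
    exact Algebra.subset_adjoin ⟨f, δ, hf, rfl⟩
  · rw [h]
    exact Subalgebra.zero_mem _

end Aux

/-- For a finite group `G` acting linearly on `V = k^m` over an algebraically
closed field of characteristic 0, every `G`-invariant polynomial on `V^{⊕n}` is integral
over the subalgebra `pol_n k[V]^G` generated by all polarizations of invariants of `V`. -/
theorem stmt_7 (k G : Type*) [Field k] [IsAlgClosed k] [CharZero k] [Group G] [Finite G]
    (m n : ℕ) (ρ : G →* ((Fin m → k) ≃ₗ[k] (Fin m → k)))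
    (F : MvPolynomial (Fin n × Fin m) k) (hF : InvVn k ρ n F) :
    IsIntegral
      (↥(Algebra.adjoin k
          {P : MvPolynomial (Fin n × Fin m) k |
            ∃ (f : MvPolynomial (Fin m) k) (δ : Fin n → ℕ),
              InvV k ρ f ∧ P = polarization k n δ f}))
      F := by
  classical
  cases nonempty_fintype G
  set R := Algebra.adjoin k
      {P : MvPolynomial (Fin n × Fin m) k |
        ∃ (f : MvPolynomial (Fin m) k) (δ : Fin n → ℕ),
          InvV k ρ f ∧ P = polarization k n δ f} with hRdef
  have hX : ∀ p : Fin n × Fin m,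
      IsIntegral ↥R (X p : MvPolynomial (Fin n × Fin m) k) := by
    rintro ⟨j, i⟩
    obtain ⟨Q, hmon, hinv, hz⟩ := exists_integral_poly ρ (X i)
    set rn : MvPolynomial (Fin m) k →+* MvPolynomial (Fin n × Fin m) k :=
      (aeval (fun i : Fin m =>
        (X (j, i) : MvPolynomial (Fin n × Fin m) k))).toRingHom with hrn
    set Q' : Polynomial (MvPolynomial (Fin n × Fin m) k) := Q.map rn with hQ'
    have hcoeffs : ∀ r, Q'.coeff r ∈ R := fun r => by
      rw [hQ', Polynomial.coeff_map]
      exact aevalj_mem ρ j (Q.coeff r) (hinv r)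
    have hsub : (↑Q'.coeffs : Set (MvPolynomial (Fin n × Fin m) k)) ⊆ ↑R.toSubring := by
      intro x hx
      obtain ⟨r, -, rfl⟩ := Polynomial.mem_coeffs_iff.mp hx
      exact hcoeffs r
    refine ⟨Q'.toSubring R.toSubring hsub,
      (Polynomial.monic_toSubring _ _ _).mpr (hmon.map rn), ?_⟩
    have h2 : algebraMap (↥R) (MvPolynomial (Fin n × Fin m) k) = R.toSubring.subtype := by
      ext x
      rfl
    rw [h2, ← Polynomial.eval_map, Polynomial.map_toSubring]
    have hXji : (X (j, i) : MvPolynomial (Fin n × Fin m) k) = rn (X i) := by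
      rw [hrn]
      simp
    rw [hQ', Polynomial.eval_map, hXji, Polynomial.eval₂_at_apply, hz, map_zero]
  have hmem : ∀ P : MvPolynomial (Fin n × Fin m) k,
      P ∈ Algebra.adjoin (↥R)
        (Set.range (X : Fin n × Fin m → MvPolynomial (Fin n × Fin m) k)) := by
    intro P
    induction P using MvPolynomial.induction_on with
    | C a =>
        have : (C a : MvPolynomial (Fin n × Fin m) k)
            = algebraMap (↥R) (MvPolynomial (Fin n × Fin m) k) (algebraMap k (↥R) a) := by
          rw [← IsScalarTower.algebraMap_apply k (↥R) (MvPolynomial (Fin n × Fin m) k),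
            MvPolynomial.algebraMap_eq]
        rw [this]
        exact Subalgebra.algebraMap_mem _ _
    | add p q hp hq => exact Subalgebra.add_mem _ hp hq
    | mul_X p i hp => exact Subalgebra.mul_mem _ hp (Algebra.subset_adjoin ⟨i, rfl⟩)
  have hle : Algebra.adjoin (↥R)
      (Set.range (X : Fin n × Fin m → MvPolynomial (Fin n × Fin m) k))
      ≤ integralClosure (↥R) (MvPolynomial (Fin n × Fin m) k) := by
    apply Algebra.adjoin_le
    rintro _ ⟨p, rfl⟩
    exact hX p
  exact (mem_integralClosure_iff _ _).mp (hle (hmem F))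
end

section
/- Let G be a finite group acting on irreducible affine varieties Z and X over an algebraically closed field k of characteristic 0 (with the action on Z through morphisms to X). Let ψ₁, ψ₂ : Z → X be morphisms such that π ∘ ψ₁ = π ∘ ψ₂, where π : X → X/G is the quotient morphism (so π separates G-orbits). Then there exists g ∈ G with ψ₂(z) = g·ψ₁(z) for all z ∈ Z. -/
/-- (algebraic formulation) Let `k` be algebraically closed of
characteristic 0, and let `A = k[X]`, `B = k[Z]` be the coordinate rings of irreducible
affine varieties `X`, `Z` over `k` (finitely generated `k`-algebra domains). Let a finite
group `G` act on `A` by `k`-algebra automorphisms `ρ`, and let `ψ₁*, ψ₂* : A → B` be the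
comorphisms of two morphisms `ψ₁, ψ₂ : Z → X`. If `π ∘ ψ₁ = π ∘ ψ₂` for the quotient
morphism `π : X → X/G` — i.e. `ψ₁*` and `ψ₂*` agree on the invariants `A^G` — then there
is `g ∈ G` with `ψ₂ = g·ψ₁`, i.e. `ψ₂* = ψ₁* ∘ ρ(g)`. -/
theorem stmt_10 (k : Type*) [Field k] [IsAlgClosed k] [CharZero k]
    (A B : Type*) [CommRing A] [CommRing B] [IsDomain A] [IsDomain B]
    [Algebra k A] [Algebra k B] [Algebra.FiniteType k A] [Algebra.FiniteType k B]
    (G : Type*) [Group G] [Finite G] (ρ : G →* (A ≃ₐ[k] A))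
    (ψ₁ ψ₂ : A →ₐ[k] B)
    (h : ∀ a : A, (∀ g : G, ρ g a = a) → ψ₁ a = ψ₂ a) :
    ∃ g : G, ∀ a : A, ψ₂ a = ψ₁ (ρ g a) := by
  have : Fintype G := Fintype.ofFinite G
  -- pointwise version
  have key : ∀ a : A, ∃ g : G, ψ₂ a = ψ₁ (ρ g a) := by
    intro a
    set P : Polynomial A := ∏ g : G, (Polynomial.X - Polynomial.C (ρ g a)) with hP
    -- P is invariant under each ρ h
    have hinv : ∀ h : G, P.map ((ρ h : A ≃ₐ[k] A) : A →+* A) = P := by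
      intro h
      rw [hP, Polynomial.map_prod]
      simp only [Polynomial.map_sub, Polynomial.map_X, Polynomial.map_C]
      refine Fintype.prod_equiv (Equiv.mulLeft h) _ _ (fun g => ?_)
      simp only [Equiv.coe_mulLeft]
      congr 1
      rw [map_mul, AlgEquiv.mul_apply]
      rfl
    have hcoeff : ∀ n : ℕ, ∀ g : G, ρ g (P.coeff n) = P.coeff n := by
      intro n g
      conv_rhs => rw [← hinv g]
      rw [Polynomial.coeff_map]
      rfl
    -- so ψ₁ and ψ₂ agree on coefficients of P
    have hmap : P.map (ψ₁ : A →+* B) = P.map (ψ₂ : A →+* B) := by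
      ext n
      simp only [Polynomial.coeff_map]
      exact h _ (hcoeff n)
    have heval : Polynomial.eval a P = 0 := by
      rw [hP]
      simp only [Polynomial.eval_prod, Polynomial.eval_sub, Polynomial.eval_X,
        Polynomial.eval_C]
      exact Finset.prod_eq_zero (Finset.mem_univ (1 : G)) (by simp)
    have h2 : Polynomial.eval (ψ₂ a) (P.map (ψ₂ : A →+* B)) = 0 := by
      rw [Polynomial.eval_map]
      show Polynomial.eval₂ (ψ₂ : A →+* B) ((ψ₂ : A →+* B) a) P = 0
      rw [Polynomial.eval₂_hom, heval, map_zero]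
    rw [← hmap, hP, Polynomial.map_prod] at h2
    simp only [Polynomial.map_sub, Polynomial.map_X, Polynomial.map_C,
      Polynomial.eval_prod, Polynomial.eval_sub, Polynomial.eval_X,
      Polynomial.eval_C] at h2
    obtain ⟨g, -, hg⟩ := Finset.prod_eq_zero_iff.mp h2
    exact ⟨g, sub_eq_zero.mp hg⟩
  -- now upgrade to a uniform g using that a vector space over an infinite
  -- field is not a finite union of proper subspaces
  set p : G → Subspace k A := fun g =>
    LinearMap.ker (ψ₂.toLinearMap - ψ₁.toLinearMap.comp (ρ g).toLinearMap) with hp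
  have hcover : ⋃ g : G, (p g : Set A) = Set.univ := by
    ext a
    simp only [Set.mem_iUnion, Set.mem_univ, iff_true, SetLike.mem_coe, hp,
      LinearMap.mem_ker, LinearMap.sub_apply, LinearMap.coe_comp, Function.comp_apply,
      AlgHom.toLinearMap_apply, AlgEquiv.toLinearMap_apply, sub_eq_zero]
    exact key a
  obtain ⟨g, hg⟩ := Subspace.exists_eq_top_of_iUnion_eq_univ hcover
  refine ⟨g, fun a => ?_⟩
  have ha : a ∈ p g := hg ▸ Submodule.mem_top
  simpa only [hp, LinearMap.mem_ker, LinearMap.sub_apply, LinearMap.coe_comp,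
    Function.comp_apply, AlgHom.toLinearMap_apply, AlgEquiv.toLinearMap_apply,
    sub_eq_zero] using ha
end

section
/- Let k be an algebraically closed field of characteristic 0 and d ≥ 2. A linear subspace L of the space R_d of binary forms of degree d lying entirely in the SL₂-nullcone (i.e., every form in L has a linear factor of multiplicity > d/2) is maximal among such subspaces if and only if L = l^{[d/2]+1}·R_{d-[d/2]-1} for some nonzero linear form l. -/
/-!
Write `m = [d/2] + 1`. Since `2m > d`, a nonzero form of degree `d` is divisible by `l ^ m` for
at most one linear form `l` up to scalars. If `p, q` lie in a subspace inside the nullcone, each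
`p + t q` is divisible by some `l_t ^ m`; after dehomogenizing, `l_t` gives a double root of
`P + t Q`, hence a factor of the Wronskian `P Q' - P' Q`. If the Wronskian is nonzero it has
finitely many irreducible factors, so `l_t ∣ l_s` for some `t ≠ s`, and then `l_t ^ m` divides
both `p` and `q`; if it vanishes, `P` and `Q` are proportional because the characteristic is zero.
So all forms of a nonzero subspace in the nullcone share one factor `l ^ m`, i.e. the subspace
lies in `l ^ m · R_{d-m}`, which is itself in the nullcone; both directions follow.
-/

open MvPolynomial

/-- A linear subspace of binary forms lies in the `SL₂`-nullcone of `R_d` iff every form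
in it has a linear factor of multiplicity `> d/2`, i.e. is of the form `l^([d/2]+1)·h`. -/
def InNullcone (k : Type*) [Field k] (d : ℕ)
    (L : Submodule k (MvPolynomial (Fin 2) k)) : Prop :=
  ∀ p ∈ L, ∃ l h : MvPolynomial (Fin 2) k,
    l.IsHomogeneous 1 ∧ l ≠ 0 ∧ p = l ^ (d / 2 + 1) * h

namespace Polynomial

section CommRing

variable {R : Type*} [CommRing R]

theorem dvd_wronskian_of_sq_dvd_add_C_mul {f a b : R[X]} {t : R}
    (h : f ^ 2 ∣ a + C t * b) : f ∣ wronskian a b := by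
  have hW : wronskian a b = wronskian (a + C t * b) b := by
    simp only [wronskian, derivative_add, derivative_mul, derivative_C, zero_mul, zero_add]
    ring
  rw [hW, wronskian]
  exact dvd_sub ((dvd_of_mul_left_dvd (pow_two f ▸ h)).mul_right _)
    ((by simpa using pow_sub_one_dvd_derivative_of_pow_dvd h : f ∣ _).mul_right _)

theorem wronskian_mul_left (g a b : R[X]) :
    wronskian (g * a) (g * b) = g ^ 2 * wronskian a b := by
  simp only [wronskian, derivative_mul]
  ring

end CommRing

variable {k : Type*} [Field k]

theorem exists_eq_C_mul_of_wronskian_eq_zero [CharZero k] {a b : k[X]} (hb : b ≠ 0)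
    (hW : wronskian a b = 0) : ∃ c : k, a = C c * b := by
  classical
  obtain ⟨a', b', ha, hb', hunit⟩ := extract_gcd a b
  have hg : gcd a b ≠ 0 := gcd_ne_zero_of_right hb
  generalize gcd a b = g at *
  subst ha hb'
  have hW' : wronskian a' b' = 0 := by
    rw [wronskian_mul_left] at hW
    exact (mul_eq_zero.mp hW).resolve_left (pow_ne_zero _ hg)
  obtain ⟨ha', hb''⟩ := ((gcd_isUnit_iff _ _).mp hunit).wronskian_eq_zero_iff.mp hW'
  obtain ⟨x, rfl⟩ : ∃ x, a' = C x :=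
    ⟨_, eq_C_of_natDegree_eq_zero (derivative_eq_zero.mp ha')⟩
  obtain ⟨y, rfl⟩ : ∃ y, b' = C y :=
    ⟨_, eq_C_of_natDegree_eq_zero (derivative_eq_zero.mp hb'')⟩
  have hy : y ≠ 0 := by rintro rfl; simp at hb
  exact ⟨x / y, by rw [mul_left_comm, ← C_mul, div_mul_cancel₀ _ hy]⟩

end Polynomial

namespace MvPolynomial

section Homogeneous

variable {σ R : Type*} [CommSemiring R]

theorem homogeneousComponent_mul_of_isHomogeneous_left {φ ψ : MvPolynomial σ R} {i n : ℕ}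
    (hφ : φ.IsHomogeneous i) (hin : i ≤ n) :
    homogeneousComponent n (φ * ψ) = φ * homogeneousComponent (n - i) ψ := by
  let _ : GradedAlgebra (homogeneousSubmodule σ R) := gradedAlgebra
  simpa [← decomposition.decompose'_apply] using
    DirectSum.coe_decompose_mul_of_left_mem_of_le (homogeneousSubmodule σ R) (b := ψ)
      ((mem_homogeneousSubmodule _ _).mpr hφ) hin

theorem mem_map_mulLeft_homogeneousSubmodule_iff {f q : MvPolynomial σ R} {e n : ℕ}
    (hf : f.IsHomogeneous e) (hq : q.IsHomogeneous n) (hen : e ≤ n) :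
    q ∈ (homogeneousSubmodule σ R (n - e)).map (LinearMap.mulLeft R f) ↔ f ∣ q := by
  constructor
  · rintro ⟨g, -, rfl⟩
    exact dvd_mul_right f g
  · rintro ⟨g, rfl⟩
    refine ⟨homogeneousComponent (n - e) g, homogeneousComponent_mem _ _, ?_⟩
    rw [LinearMap.mulLeft_apply, ← homogeneousComponent_mul_of_isHomogeneous_left hf hen,
      homogeneousComponent_of_mem ((mem_homogeneousSubmodule _ _).mpr hq), if_pos rfl]

theorem map_mulLeft_homogeneousSubmodule_le {f : MvPolynomial σ R} {e n : ℕ}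
    (hf : f.IsHomogeneous e) (hen : e ≤ n) :
    (homogeneousSubmodule σ R (n - e)).map (LinearMap.mulLeft R f) ≤
      homogeneousSubmodule σ R n := by
  rintro _ ⟨g, hg, rfl⟩
  simpa [Nat.add_sub_cancel' hen] using hf.mul ((mem_homogeneousSubmodule _ _).mp hg)

theorem map_mulLeft_homogeneousSubmodule_ne_bot {σ R : Type*} [CommRing R] [IsDomain R]
    [Nonempty σ] {f : MvPolynomial σ R} (hf : f ≠ 0) (n : ℕ) :
    (homogeneousSubmodule σ R n).map (LinearMap.mulLeft R f) ≠ ⊥ := by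
  obtain ⟨i⟩ := ‹Nonempty σ›
  exact (Submodule.ne_bot_iff _).mpr ⟨f * X i ^ n, ⟨X i ^ n, isHomogeneous_X_pow i n, rfl⟩,
    mul_ne_zero hf (pow_ne_zero _ (X_ne_zero i))⟩

end Homogeneous

section LinearForm

variable {σ k : Type*} [Field k]

theorem prime_of_isHomogeneous_one {l : MvPolynomial σ k} (hl : l.IsHomogeneous 1)
    (hl0 : l ≠ 0) : Prime l := by
  refine (irreducible_of_totalDegree_eq_one (hl.totalDegree hl0) fun x hx => ?_).prime
  obtain ⟨m, hm⟩ := ne_zero_iff.mp hl0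
  exact (ne_zero_of_dvd_ne_zero hm (hx m)).isUnit

theorem dvd_of_pow_dvd_of_pow_dvd_of_totalDegree_lt {p l₁ l₂ : MvPolynomial σ k}
    {m : ℕ} (h₁ : l₁.IsHomogeneous 1) (h₁0 : l₁ ≠ 0) (h₂ : l₂.IsHomogeneous 1)
    (h₂0 : l₂ ≠ 0) (hp0 : p ≠ 0) (hpm : p.totalDegree < 2 * m) (hd₁ : l₁ ^ m ∣ p)
    (hd₂ : l₂ ^ m ∣ p) :
    l₁ ∣ l₂ := by
  by_contra hnd
  obtain ⟨g, rfl⟩ := hd₂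
  have hg : l₁ ^ m ∣ g :=
    (prime_of_isHomogeneous_one h₁ h₁0).pow_dvd_of_dvd_mul_left m
      (fun h => hnd ((prime_of_isHomogeneous_one h₁ h₁0).dvd_of_dvd_pow h)) hd₁
  have hdeg := totalDegree_le_of_dvd_of_isDomain (mul_dvd_mul_left (l₂ ^ m) hg) hp0
  rw [totalDegree_mul_of_isDomain (pow_ne_zero _ h₂0) (pow_ne_zero _ h₁0),
    (h₁.pow m).totalDegree (pow_ne_zero _ h₁0),
    (h₂.pow m).totalDegree (pow_ne_zero _ h₂0)] at hdeg
  omega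

theorem dvd_and_dvd_of_dvd_add_C_mul {f p q : MvPolynomial σ k} {t s : k} (hts : t ≠ s)
    (ht : f ∣ p + C t * q) (hs : f ∣ p + C s * q) : f ∣ p ∧ f ∣ q := by
  have hq : f ∣ q := by
    have hsub : q = C (s - t)⁻¹ * ((p + C s * q) - (p + C t * q)) := by
      rw [add_sub_add_left_eq_sub, ← sub_mul, ← C_sub, ← mul_assoc, ← C_mul,
        inv_mul_cancel₀ (sub_ne_zero.mpr hts.symm), C_1, one_mul]
    exact hsub ▸ (dvd_sub hs ht).mul_left _
  exact ⟨by simpa using dvd_sub ht (hq.mul_left (C t)), hq⟩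

end LinearForm

section Dehomogenize

variable {k : Type*} [Field k]

noncomputable def dehomogenize : MvPolynomial (Fin 2) k →ₐ[k] Polynomial k :=
  aeval ![Polynomial.X, 1]

theorem dehomogenize_C (c : k) : dehomogenize (C c) = Polynomial.C c := by
  simp [dehomogenize]

theorem IsHomogeneous.eq_of_dehomogenize_eq {p q : MvPolynomial (Fin 2) k} {n : ℕ}
    (hp : p.IsHomogeneous n) (hq : q.IsHomogeneous n) (h : dehomogenize p = dehomogenize q) :
    p = q := by
  rw [← Polynomial.homogenize_eq_of_isHomogeneous hp h]
  exact Polynomial.homogenize_eq_of_isHomogeneous hq rfl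

theorem IsHomogeneous.natDegree_dehomogenize_le {p : MvPolynomial (Fin 2) k} {n : ℕ}
    (hp : p.IsHomogeneous n) : (dehomogenize p).natDegree ≤ n := by
  rw [p.as_sum, map_sum]
  refine Polynomial.natDegree_sum_le_of_forall_le _ _ fun m hm => ?_
  rw [dehomogenize, aeval_monomial, Finsupp.prod_fintype _ _ (by simp), Fin.prod_univ_two]
  simp only [Matrix.cons_val_zero, Matrix.cons_val_one, one_pow, mul_one,
    ← Polynomial.C_eq_algebraMap]
  have hdeg := hp (mem_support_iff.mp hm)
  simp only [Finsupp.weight_apply, Pi.one_apply, smul_eq_mul, mul_one, implies_true,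
    Finsupp.sum_fintype, Fin.sum_univ_two] at hdeg
  exact (Polynomial.natDegree_C_mul_X_pow_le _ _).trans (by omega)

theorem IsHomogeneous.dvd_of_associated_dehomogenize {l l' : MvPolynomial (Fin 2) k} {n : ℕ}
    (hl : l.IsHomogeneous n) (hl' : l'.IsHomogeneous n)
    (h : Associated (dehomogenize l) (dehomogenize l')) : l ∣ l' := by
  obtain ⟨u, hu⟩ := h
  obtain ⟨c, -, hc⟩ := Polynomial.isUnit_iff.mp u.isUnit
  refine ⟨C c, hl'.eq_of_dehomogenize_eq (by simpa [mul_comm] using hl.C_mul c) ?_⟩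
  rw [map_mul, dehomogenize_C, hc, hu]

theorem IsHomogeneous.irreducible_dehomogenize {l : MvPolynomial (Fin 2) k}
    (hl : l.IsHomogeneous 1) (hl0 : l ≠ 0) (hu : ¬IsUnit (dehomogenize l)) :
    Irreducible (dehomogenize l) := by
  have h0 : dehomogenize l ≠ 0 := fun h =>
    hl0 (hl.eq_of_dehomogenize_eq (isHomogeneous_zero _ _ _) (by rw [h, map_zero]))
  have hdeg : (dehomogenize l).natDegree ≠ 0 := fun h => hu <| by
    rw [Polynomial.eq_C_of_natDegree_eq_zero h] at h0 ⊢
    exact Polynomial.isUnit_C.mpr (Ne.isUnit fun hc => h0 (by rw [hc, map_zero]))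
  apply Polynomial.irreducible_of_degree_eq_one
  rw [Polynomial.degree_eq_natDegree h0]
  have := hl.natDegree_dehomogenize_le
  norm_cast
  omega

theorem exists_ne_dvd_of_wronskian_ne_zero [Infinite k] {p q : MvPolynomial (Fin 2) k}
    {l : k → MvPolynomial (Fin 2) k} (hl : ∀ t, (l t).IsHomogeneous 1) (hl0 : ∀ t, l t ≠ 0)
    (hdvd : ∀ t, l t ^ 2 ∣ p + C t * q)
    (hW : (dehomogenize p).wronskian (dehomogenize q) ≠ 0) :
    ∃ t s, t ≠ s ∧ l t ∣ l s := by
  classical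
  have hmaps : Set.MapsTo (fun t => normalize (dehomogenize (l t))) Set.univ
      (insert 1 (UniqueFactorizationMonoid.normalizedFactors
        ((dehomogenize p).wronskian (dehomogenize q))).toFinset) := by
    intro t _
    by_cases hu : IsUnit (dehomogenize (l t))
    · exact Or.inl (normalize_eq_one.mpr hu)
    · have hdvdW : dehomogenize (l t) ∣ (dehomogenize p).wronskian (dehomogenize q) := by
        refine Polynomial.dvd_wronskian_of_sq_dvd_add_C_mul (t := t) ?_
        simpa [dehomogenize_C] using map_dvd dehomogenize (hdvd t)
      obtain ⟨r, hr, hassoc⟩ :=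
        UniqueFactorizationMonoid.exists_mem_normalizedFactors_of_dvd hW
          ((hl t).irreducible_dehomogenize (hl0 t) hu) hdvdW
      refine Or.inr ?_
      simp only [Finset.mem_coe, Multiset.mem_toFinset]
      rwa [normalize_eq_normalize_iff_associated.mpr hassoc,
        UniqueFactorizationMonoid.normalize_normalized_factor r hr]
  obtain ⟨t, -, s, -, hts, heq⟩ :=
    Set.infinite_univ.exists_ne_map_eq_of_mapsTo hmaps (Set.toFinite _)
  exact ⟨t, s, hts, (hl t).dvd_of_associated_dehomogenize (hl s)
    (normalize_eq_normalize_iff_associated.mp heq)⟩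

theorem exists_pow_dvd_of_forall_pow_dvd_add_C_mul [CharZero k]
    {p q : MvPolynomial (Fin 2) k} {n m : ℕ} (hp : p.IsHomogeneous n) (hq : q.IsHomogeneous n)
    (hm : 2 ≤ m)
    (h : ∀ t : k, ∃ l : MvPolynomial (Fin 2) k,
      l.IsHomogeneous 1 ∧ l ≠ 0 ∧ l ^ m ∣ p + C t * q) :
    ∃ l : MvPolynomial (Fin 2) k,
      l.IsHomogeneous 1 ∧ l ≠ 0 ∧ l ^ m ∣ p ∧ l ^ m ∣ q := by
  choose l hl hl0 hdvd using h
  by_cases hW : (dehomogenize p).wronskian (dehomogenize q) = 0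
  · by_cases hq0 : q = 0
    · subst hq0
      exact ⟨l 0, hl 0, hl0 0, by simpa using hdvd 0, dvd_zero _⟩
    obtain ⟨c, hc⟩ := Polynomial.exists_eq_C_mul_of_wronskian_eq_zero
      (fun h => hq0 (hq.eq_of_dehomogenize_eq (isHomogeneous_zero _ _ _) (by rw [h, map_zero])))
      hW
    have hpc : p = C c * q :=
      hp.eq_of_dehomogenize_eq (hq.C_mul c) (by rw [hc, map_mul, dehomogenize_C])
    have hzero : p + C (-c) * q = 0 := by rw [hpc, map_neg]; ring
    exact ⟨l (-c + 1), hl _, hl0 _, dvd_and_dvd_of_dvd_add_C_mul (by simp)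
      (hzero ▸ dvd_zero _) (hdvd _)⟩
  · obtain ⟨t, s, hts, hls⟩ := exists_ne_dvd_of_wronskian_ne_zero hl hl0
      (fun t => (pow_dvd_pow _ hm).trans (hdvd t)) hW
    exact ⟨l t, hl t, hl0 t,
      dvd_and_dvd_of_dvd_add_C_mul hts (hdvd t) ((pow_dvd_pow_of_dvd hls m).trans (hdvd s))⟩

end Dehomogenize

end MvPolynomial

section Nullcone

variable {k : Type*} [Field k] {d : ℕ}

theorem inNullcone_map_mulLeft_pow {l : MvPolynomial (Fin 2) k} (hl : l.IsHomogeneous 1)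
    (hl0 : l ≠ 0) (S : Submodule k (MvPolynomial (Fin 2) k)) :
    InNullcone k d (S.map (LinearMap.mulLeft k (l ^ (d / 2 + 1)))) := by
  rintro _ ⟨g, -, rfl⟩
  exact ⟨l, g, hl, hl0, rfl⟩

variable [CharZero k] {L : Submodule k (MvPolynomial (Fin 2) k)}

theorem InNullcone.pow_dvd_of_mem (hLN : InNullcone k d L) (hd : 2 ≤ d)
    (hLd : L ≤ homogeneousSubmodule (Fin 2) k d) {p l : MvPolynomial (Fin 2) k} (hpL : p ∈ L)
    (hp0 : p ≠ 0) (hl : l.IsHomogeneous 1) (hl0 : l ≠ 0) (hlp : l ^ (d / 2 + 1) ∣ p)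
    {q : MvPolynomial (Fin 2) k} (hqL : q ∈ L) : l ^ (d / 2 + 1) ∣ q := by
  have hp := (mem_homogeneousSubmodule _ _).mp (hLd hpL)
  have hpencil (t : k) : p + C t * q ∈ L :=
    L.add_mem hpL (by rw [C_mul']; exact L.smul_mem t hqL)
  obtain ⟨l', hl', hl'0, hl'p, hl'q⟩ :=
    exists_pow_dvd_of_forall_pow_dvd_add_C_mul (m := d / 2 + 1)
      hp ((mem_homogeneousSubmodule _ _).mp (hLd hqL)) (by omega) fun t => by
        obtain ⟨l, h, hl, hl0, heq⟩ := hLN _ (hpencil t)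
        exact ⟨l, hl, hl0, heq ▸ dvd_mul_right _ _⟩
  have hll' : l ∣ l' := dvd_of_pow_dvd_of_pow_dvd_of_totalDegree_lt hl hl0 hl' hl'0 hp0
    (by rw [hp.totalDegree hp0]; omega) hlp hl'p
  exact (pow_dvd_pow_of_dvd hll' _).trans hl'q

theorem InNullcone.le_map_mulLeft_pow (hLN : InNullcone k d L) (hd : 2 ≤ d)
    (hLd : L ≤ homogeneousSubmodule (Fin 2) k d) {p l : MvPolynomial (Fin 2) k} (hpL : p ∈ L)
    (hp0 : p ≠ 0) (hl : l.IsHomogeneous 1) (hl0 : l ≠ 0) (hlp : l ^ (d / 2 + 1) ∣ p) :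
    L ≤ (homogeneousSubmodule (Fin 2) k (d - (d / 2 + 1))).map
      (LinearMap.mulLeft k (l ^ (d / 2 + 1))) := fun q hqL =>
  (mem_map_mulLeft_homogeneousSubmodule_iff (by simpa using hl.pow (d / 2 + 1))
    ((mem_homogeneousSubmodule _ _).mp (hLd hqL)) (by omega)).mpr
    (hLN.pow_dvd_of_mem hd hLd hpL hp0 hl hl0 hlp hqL)

end Nullcone

theorem stmt_12_general (k : Type*) [Field k] [CharZero k] (d : ℕ) (hd : 2 ≤ d)
    (L : Submodule k (MvPolynomial (Fin 2) k))
    (hLd : L ≤ homogeneousSubmodule (Fin 2) k d)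
    (hLN : InNullcone k d L) :
    (∀ L' : Submodule k (MvPolynomial (Fin 2) k),
        L' ≤ homogeneousSubmodule (Fin 2) k d → InNullcone k d L' → L ≤ L' → L' = L) ↔
    ∃ l : MvPolynomial (Fin 2) k, l.IsHomogeneous 1 ∧ l ≠ 0 ∧
      L = Submodule.map (LinearMap.mulLeft k (l ^ (d / 2 + 1)))
            (homogeneousSubmodule (Fin 2) k (d - (d / 2 + 1))) := by
  have hM_le : ∀ l : MvPolynomial (Fin 2) k, l.IsHomogeneous 1 →
      (homogeneousSubmodule (Fin 2) k (d - (d / 2 + 1))).map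
        (LinearMap.mulLeft k (l ^ (d / 2 + 1))) ≤ homogeneousSubmodule (Fin 2) k d :=
    fun l hl => map_mulLeft_homogeneousSubmodule_le (by simpa using hl.pow (d / 2 + 1))
      (by omega)
  constructor
  · intro hmax
    by_cases hL : L = ⊥
    · have hX : (X 0 : MvPolynomial (Fin 2) k).IsHomogeneous 1 := isHomogeneous_X k 0
      exact (map_mulLeft_homogeneousSubmodule_ne_bot (pow_ne_zero _ (X_ne_zero 0)) _
        (hL ▸ hmax _ (hM_le _ hX) (inNullcone_map_mulLeft_pow hX (X_ne_zero 0) _)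
          (hL ▸ bot_le))).elim
    obtain ⟨p, hpL, hp0⟩ := Submodule.exists_mem_ne_zero_of_ne_bot hL
    obtain ⟨l, h, hl, hl0, rfl⟩ := hLN p hpL
    exact ⟨l, hl, hl0, (hmax _ (hM_le l hl) (inNullcone_map_mulLeft_pow hl hl0 _)
      (hLN.le_map_mulLeft_pow hd hLd hpL hp0 hl hl0 (dvd_mul_right _ _))).symm⟩
  · rintro ⟨l, hl, hl0, rfl⟩ L' hL'd hL'N hLL'
    obtain ⟨p, hp, hp0⟩ := Submodule.exists_mem_ne_zero_of_ne_bot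
      (map_mulLeft_homogeneousSubmodule_ne_bot (pow_ne_zero (d / 2 + 1) hl0) _)
    refine le_antisymm (hL'N.le_map_mulLeft_pow hd hL'd (hLL' hp) hp0 hl hl0 ?_) hLL'
    obtain ⟨g, -, rfl⟩ := hp
    exact dvd_mul_right _ _

/-- Let `k` be algebraically closed of characteristic 0 and `d ≥ 2`. A
linear subspace `L ⊆ R_d` lying in the `SL₂`-nullcone is maximal among such subspaces iff
`L = l^([d/2]+1)·R_{d-[d/2]-1}` for some nonzero linear form `l`. -/
theorem stmt_12 (k : Type*) [Field k] [IsAlgClosed k] [CharZero k] (d : ℕ) (hd : 2 ≤ d)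
    (L : Submodule k (MvPolynomial (Fin 2) k))
    (hLd : L ≤ homogeneousSubmodule (Fin 2) k d)
    (hLN : InNullcone k d L) :
    (∀ L' : Submodule k (MvPolynomial (Fin 2) k),
        L' ≤ homogeneousSubmodule (Fin 2) k d → InNullcone k d L' → L ≤ L' → L' = L) ↔
    ∃ l : MvPolynomial (Fin 2) k, l.IsHomogeneous 1 ∧ l ≠ 0 ∧
      L = Submodule.map (LinearMap.mulLeft k (l ^ (d / 2 + 1)))
            (homogeneousSubmodule (Fin 2) k (d - (d / 2 + 1))) :=
  stmt_12_general k d hd L hLd hLN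
end

section
/- Let k be an algebraically closed field of characteristic 0, d ≥ 2, and let f₁, f₂ ∈ R_d be binary forms such that every linear combination αf₁ + βf₂ has a linear factor of multiplicity at least [d/2]+1. Then there is a single nonzero linear form l such that l^{[d/2]+1} divides both f₁ and f₂. -/
/-!
For a partial derivative `∂`, put `W = f₁ ∂f₂ - f₂ ∂f₁`. For every member `F = f₁ + t f₂` of the
pencil also `W = F ∂f₂ - f₂ ∂F`, so `l ^ (m + 1) ∣ F` gives `l ^ m ∣ W`, where `m = [d/2] ≥ 1`.
If `W ≠ 0`, it has only finitely many prime factors up to association while `k` is infinite, so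
the same `l ^ (m + 1)` divides two distinct members of the pencil, hence both `f₁` and `f₂`.
If `W = 0` for both partial derivatives, `f₂` is a multiple of `f₁`: after cancelling the gcd,
`u ∂v = v ∂u` with `u, v` coprime forces `u ∣ ∂u`, so `∂u = 0` by degree, and in characteristic
zero `u` is a constant.
-/

open MvPolynomial

theorem Derivation.pow_dvd_of_pow_succ_dvd {R A : Type*} [CommSemiring R] [CommSemiring A]
    [Algebra R A] (D : Derivation R A A) {a x : A} {n : ℕ} (h : a ^ (n + 1) ∣ x) :
    a ^ n ∣ D x := by
  obtain ⟨q, rfl⟩ := h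
  rw [D.leibniz, D.leibniz_pow, smul_eq_mul, smul_eq_mul, nsmul_eq_mul, Nat.add_sub_cancel]
  exact dvd_add (Dvd.intro (a * D q) (by ring))
    (Dvd.intro (q * (n + 1) * D a) (by push_cast; ring))

theorem Derivation.pow_dvd_mul_sub_mul {R A : Type*} [CommSemiring R] [CommRing A]
    [Algebra R A] (D : Derivation R A A) {a x : A} {n : ℕ} (h : a ^ (n + 1) ∣ x) (y : A) :
    a ^ n ∣ x * D y - y * D x :=
  dvd_sub (((pow_dvd_pow a n.le_succ).trans h).mul_right _)
    ((D.pow_dvd_of_pow_succ_dvd h).mul_left y)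

theorem UniqueFactorizationMonoid.exists_ne_associated_of_forall_dvd {α ι : Type*}
    [CommMonoidWithZero α] [UniqueFactorizationMonoid α] [Infinite ι] {p : ι → α} {w : α}
    (hp : ∀ i, Irreducible (p i)) (hw : w ≠ 0) (hdvd : ∀ i, p i ∣ w) :
    ∃ i j, i ≠ j ∧ Associated (p i) (p j) := by
  classical
  choose q hq hpq using fun i => exists_mem_factors_of_dvd hw (hp i) (hdvd i)
  obtain ⟨i, j, hij, hqij⟩ := Finite.exists_ne_map_eq_of_infinite
    fun i => (⟨q i, Multiset.mem_toFinset.mpr (hq i)⟩ : (factors w).toFinset)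
  have hqij' : q i = q j := congrArg Subtype.val hqij
  exact ⟨i, j, hij, (hpq i).trans (hqij' ▸ (hpq j).symm)⟩

theorem dvd_of_dvd_add_algebraMap_mul {K A : Type*} [Field K] [CommRing A] [Algebra K A]
    {a x y : A} {s t : K} (hst : s ≠ t) (hs : a ∣ x + algebraMap K A s * y)
    (ht : a ∣ x + algebraMap K A t * y) : a ∣ x ∧ a ∣ y := by
  have hy : a ∣ y := by
    have hunit : IsUnit (algebraMap K A (s - t)) :=
      (isUnit_iff_ne_zero.mpr (sub_ne_zero.mpr hst)).map _
    rw [← hunit.dvd_mul_left]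
    convert dvd_sub hs ht using 1
    rw [map_sub]; ring
  exact ⟨by simpa using dvd_sub hs (hy.mul_left (algebraMap K A s)), hy⟩

namespace MvPolynomial

variable {σ R K : Type*}

theorem totalDegree_pderiv_lt [CommSemiring R] {f : MvPolynomial σ R} {i : σ}
    (h : pderiv i f ≠ 0) : (pderiv i f).totalDegree < f.totalDegree := by
  have hsucc : ∀ m ∈ (pderiv i f).support, (m.sum fun _ e => e) + 1 ≤ f.totalDegree := by
    intro m hm
    rw [mem_support_iff, coeff_pderiv] at hm
    have := le_totalDegree (mem_support_iff.mpr (left_ne_zero_of_mul hm))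
    rwa [Finsupp.sum_add_index' (fun _ => rfl) (fun _ _ _ => rfl),
      Finsupp.sum_single_index rfl] at this
  obtain ⟨m₀, hm₀⟩ := support_nonempty.mpr h
  have hpos : 0 < f.totalDegree := by have := hsucc m₀ hm₀; omega
  rw [totalDegree, Finset.sup_lt_iff (by exact_mod_cast hpos)]
  exact hsucc

theorem pderiv_eq_zero_of_dvd [CommRing R] [IsDomain R] {f : MvPolynomial σ R} {i : σ}
    (h : f ∣ pderiv i f) : pderiv i f = 0 := by
  by_contra hne
  exact (totalDegree_le_of_dvd_of_isDomain h hne).not_gt (totalDegree_pderiv_lt hne)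

theorem eq_C_of_forall_pderiv_eq_zero [CommSemiring R] [NoZeroDivisors R] [CharZero R]
    {f : MvPolynomial σ R} (h : ∀ i, pderiv i f = 0) : f = C (coeff 0 f) := by
  classical
  ext m
  rw [coeff_C]
  split_ifs with hm
  · rw [hm]
  obtain ⟨i, hi⟩ : ∃ i, m i ≠ 0 := by
    by_contra! hzero
    exact hm (Finsupp.ext hzero).symm
  have hcoeff := coeff_pderiv (i := i) f (m - Finsupp.single i 1)
  rw [h i, coeff_zero, tsub_add_cancel_of_le
    (Finsupp.single_le_iff.mpr (Nat.one_le_iff_ne_zero.mpr hi))] at hcoeff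
  exact (mul_eq_zero.mp hcoeff.symm).resolve_right (Nat.cast_add_one_ne_zero _)

theorem dvd_of_forall_mul_pderiv_eq [Field K] [CharZero K] {f g : MvPolynomial σ K} (hf : f ≠ 0)
    (h : ∀ i, f * pderiv i g = g * pderiv i f) : f ∣ g := by
  obtain ⟨u, v, c, huv, rfl, rfl⟩ := UniqueFactorizationMonoid.exists_reduced_factors f hf g
  have hc : c ≠ 0 := left_ne_zero_of_mul hf
  have hu : u ≠ 0 := right_ne_zero_of_mul hf
  have hpderiv : ∀ i, pderiv i u = 0 := fun i => by
    have hcancel : u * pderiv i v = v * pderiv i u :=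
      mul_left_cancel₀ (mul_ne_zero hc hc) (by
        have hi := h i
        simp only [Derivation.leibniz, smul_eq_mul] at hi
        linear_combination hi)
    exact pderiv_eq_zero_of_dvd (huv.dvd_of_dvd_mul_left (Dvd.intro _ hcancel))
  have hunit : IsUnit u := by
    rw [eq_C_of_forall_pderiv_eq_zero hpderiv] at hu ⊢
    exact (isUnit_iff_ne_zero.mpr fun h0 => hu (by rw [h0, C_0])).map C
  exact hunit.mul_right_dvd.mpr (dvd_mul_right c v)

theorem prime_of_totalDegree_eq_one [Field K] {l : MvPolynomial σ K} (hl : l.totalDegree = 1) :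
    Prime l := by
  refine UniqueFactorizationMonoid.irreducible_iff_prime.mp
    (irreducible_of_totalDegree_eq_one hl ?_)
  obtain ⟨m, hm⟩ := support_nonempty.mpr (show l ≠ 0 by rintro rfl; simp at hl)
  exact fun x hx => isUnit_iff_ne_zero.mpr (ne_zero_of_dvd_ne_zero (mem_support_iff.mp hm) (hx m))

end MvPolynomial

theorem stmt_13_general (k : Type*) [Field k] [CharZero k] (d : ℕ) (hd : 2 ≤ d)
    (f₁ f₂ : MvPolynomial (Fin 2) k)
    (h : ∀ α β : k, ∃ l : MvPolynomial (Fin 2) k,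
        l.IsHomogeneous 1 ∧ l ≠ 0 ∧ l ^ (d / 2 + 1) ∣ (C α * f₁ + C β * f₂)) :
    ∃ l : MvPolynomial (Fin 2) k,
      l.IsHomogeneous 1 ∧ l ≠ 0 ∧ l ^ (d / 2 + 1) ∣ f₁ ∧ l ^ (d / 2 + 1) ∣ f₂ := by
  by_cases hW : ∀ i, f₁ * pderiv i f₂ = f₂ * pderiv i f₁
  · by_cases hf₁ : f₁ = 0
    · obtain ⟨l, hl, hl0, hdvd⟩ := h 0 1
      exact ⟨l, hl, hl0, by simp [hf₁], by simpa [hf₁] using hdvd⟩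
    · obtain ⟨l, hl, hl0, hdvd⟩ := h 1 0
      replace hdvd : l ^ (d / 2 + 1) ∣ f₁ := by simpa using hdvd
      exact ⟨l, hl, hl0, hdvd, hdvd.trans (dvd_of_forall_mul_pderiv_eq hf₁ hW)⟩
  obtain ⟨i, hi⟩ := not_forall.mp hW
  choose l hl hl0 hdvd using fun t : k => h 1 t
  have hprime : ∀ t, Prime (l t) := fun t =>
    prime_of_totalDegree_eq_one ((hl t).totalDegree (hl0 t))
  have hdvdW : ∀ t, l t ∣ f₁ * pderiv i f₂ - f₂ * pderiv i f₁ := fun t => by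
    have hpencil : f₁ * pderiv i f₂ - f₂ * pderiv i f₁ =
        (C 1 * f₁ + C t * f₂) * pderiv i f₂ - f₂ * pderiv i (C 1 * f₁ + C t * f₂) := by
      simp only [map_add, pderiv_C_mul, C_1, one_mul]; ring
    rw [hpencil]
    exact (dvd_pow_self (l t) (show d / 2 ≠ 0 by omega)).trans
      ((pderiv (R := k) i).pow_dvd_mul_sub_mul (hdvd t) f₂)
  obtain ⟨s, t, hst, hassoc⟩ := UniqueFactorizationMonoid.exists_ne_associated_of_forall_dvd
    (fun t => (hprime t).irreducible) (sub_ne_zero.mpr hi) hdvdW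
  have hdvd_s : l s ^ (d / 2 + 1) ∣ f₁ + algebraMap k _ s * f₂ := by simpa using hdvd s
  have hdvd_t : l s ^ (d / 2 + 1) ∣ f₁ + algebraMap k _ t * f₂ := by
    simpa using (hassoc.pow_pow.dvd.trans (hdvd t))
  obtain ⟨h₁, h₂⟩ := dvd_of_dvd_add_algebraMap_mul hst hdvd_s hdvd_t
  exact ⟨l s, hl s, hl0 s, h₁, h₂⟩

/-- Let `k` be algebraically closed of characteristic 0, `d ≥ 2`, and let
`f₁, f₂` be binary forms of degree `d` such that every linear combination `αf₁ + βf₂` is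
divisible by the `([d/2]+1)`-st power of some nonzero linear form. Then a single nonzero
linear form `l` exists with `l^([d/2]+1)` dividing both `f₁` and `f₂`. -/
theorem stmt_13 (k : Type*) [Field k] [IsAlgClosed k] [CharZero k] (d : ℕ) (hd : 2 ≤ d)
    (f₁ f₂ : MvPolynomial (Fin 2) k)
    (hf₁ : f₁.IsHomogeneous d) (hf₂ : f₂.IsHomogeneous d)
    (h : ∀ α β : k, ∃ l : MvPolynomial (Fin 2) k,
        l.IsHomogeneous 1 ∧ l ≠ 0 ∧ l ^ (d / 2 + 1) ∣ (C α * f₁ + C β * f₂)) :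
    ∃ l : MvPolynomial (Fin 2) k,
      l.IsHomogeneous 1 ∧ l ≠ 0 ∧ l ^ (d / 2 + 1) ∣ f₁ ∧ l ^ (d / 2 + 1) ∣ f₂ :=
  stmt_13_general k d hd f₁ f₂ h
end

section
/- Let k be an algebraically closed field of characteristic 0. The 2-dimensional subspace L = span{E₁₂ + E₂₃, E₂₁ - E₃₂} of sl₃(k) consists entirely of nilpotent matrices, but is not triangularizable: there is no invertible 3×3 matrix P such that P L P⁻¹ consists of strictly upper triangular matrices. -/
open Matrix

/-!
With `A = E₁₂ + E₂₃` and `B = E₂₁ - E₃₂`, every matrix `a • A + b • B` of `L` cubes to zero.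
On the other hand `[A, B] = diag(1, -2, 1)`. If `P L P⁻¹` consisted of strictly upper triangular matrices, so would the commutator of
`P A P⁻¹` and `P B P⁻¹`, which is `P [A, B] P⁻¹`; strictly upper triangular matrices are
nilpotent, whereas no power of `diag(1, -2, 1)` vanishes.
-/

namespace Matrix

variable {R : Type*}

def IsStrictUpperTriangular {n : Type*} [LE n] [Zero R] (M : Matrix n n R) : Prop :=
  ∀ i j, j ≤ i → M i j = 0

section LinearOrder

variable {n : Type*} [LinearOrder n] {X Y : Matrix n n R}

theorem IsStrictUpperTriangular.sub [AddGroup R] (hX : X.IsStrictUpperTriangular)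
    (hY : Y.IsStrictUpperTriangular) : (X - Y).IsStrictUpperTriangular := fun i j hij => by
  rw [sub_apply, hX i j hij, hY i j hij, sub_zero]

theorem IsStrictUpperTriangular.mul [Fintype n] [NonUnitalNonAssocSemiring R]
    (hX : X.IsStrictUpperTriangular) (hY : Y.IsStrictUpperTriangular) :
    (X * Y).IsStrictUpperTriangular := fun i j hij =>
  Finset.sum_eq_zero fun l _ => by
    rcases le_or_gt l i with hli | hil
    · exact mul_eq_zero_of_left (hX i l hli) _
    · exact mul_eq_zero_of_right _ (hY l j (hij.trans hil.le))

end LinearOrder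

theorem IsStrictUpperTriangular.pow_apply_eq_zero [Semiring R] {n : ℕ}
    {X : Matrix (Fin n) (Fin n) R} (hX : X.IsStrictUpperTriangular) (m : ℕ) (i j : Fin n)
    (hij : (j : ℕ) < i + m) : (X ^ m) i j = 0 := by
  induction m generalizing j with
  | zero => exact one_apply_ne (Fin.ne_of_gt (by simpa using hij))
  | succ m ih =>
    rw [pow_succ, mul_apply]
    refine Finset.sum_eq_zero fun l _ => ?_
    rcases lt_or_ge (l : ℕ) (i + m) with hl | hl
    · rw [ih l hl, zero_mul]
    · rw [hX l j (Fin.le_iff_val_le_val.mpr (by omega)), mul_zero]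

theorem IsStrictUpperTriangular.isNilpotent [Semiring R] {n : ℕ}
    {X : Matrix (Fin n) (Fin n) R} (hX : X.IsStrictUpperTriangular) : IsNilpotent X :=
  ⟨n, ext fun i j => hX.pow_apply_eq_zero n i j (by omega)⟩

theorem isNilpotent_apply_of_isNilpotent_diagonal {n : Type*} [Fintype n] [DecidableEq n]
    [Semiring R]
    {d : n → R} (h : IsNilpotent (diagonal d)) (i : n) : IsNilpotent (d i) := by
  obtain ⟨m, hm⟩ := h
  exact ⟨m, by simpa [diagonal_pow] using congr_fun₂ hm i i⟩

end Matrix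

theorem Units.isNilpotent_of_isNilpotent_conj {M : Type*} [MonoidWithZero M] (u : Mˣ) {x : M}
    (h : IsNilpotent (u * x * ↑u⁻¹)) : IsNilpotent x := by
  obtain ⟨m, hm⟩ := h
  rw [Units.conj_pow, Units.mul_left_eq_zero, Units.mul_right_eq_zero] at hm
  exact ⟨m, hm⟩

theorem Units.conj_mul_conj_sub {R : Type*} [Ring R] (u : Rˣ) (x y : R) :
    u * x * ↑u⁻¹ * (u * y * ↑u⁻¹) - u * y * ↑u⁻¹ * (u * x * ↑u⁻¹) = u * (x * y - y * x) * ↑u⁻¹ := by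
  simp only [mul_assoc, Units.inv_mul_cancel_left, mul_sub, sub_mul]

section SlThree

variable {k : Type*} [CommRing k]

theorem smul_add_smul_eq_fin_three (a b : k) :
    a • (single 0 1 (1 : k) + single 1 2 1) + b • (single 1 0 (1 : k) - single 2 1 1) =
      !![0, a, 0; b, 0, a; 0, -b, 0] := by
  ext i j
  fin_cases i <;> fin_cases j <;> simp [single]

theorem fin_three_pow_three_eq_zero (a b : k) : !![0, a, 0; b, 0, a; 0, -b, 0] ^ 3 = 0 := by
  rw [pow_succ, pow_two, mul_fin_three, mul_fin_three]
  ext i j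
  fin_cases i <;> fin_cases j <;> simp <;> ring

theorem commutator_eq_diagonal :
    (single 0 1 (1 : k) + single 1 2 1 : Matrix (Fin 3) (Fin 3) k) *
          (single 1 0 (1 : k) - single 2 1 1) -
        (single 1 0 (1 : k) - single 2 1 1) * (single 0 1 (1 : k) + single 1 2 1) =
      diagonal ![1, -2, 1] := by
  ext i j
  fin_cases i <;> fin_cases j <;> simp [Matrix.sub_apply, mul_apply, single]
  norm_num

end SlThree

theorem stmt_15_general (k : Type*) [Field k] :
    (∀ M ∈ Submodule.span k
        ({single 0 1 (1 : k) + single 1 2 1,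
          single 1 0 (1 : k) - single 2 1 1} :
          Set (Matrix (Fin 3) (Fin 3) k)), IsNilpotent M) ∧
    ¬ ∃ P : GL (Fin 3) k, ∀ M ∈ Submodule.span k
        ({single 0 1 (1 : k) + single 1 2 1,
          single 1 0 (1 : k) - single 2 1 1} :
          Set (Matrix (Fin 3) (Fin 3) k)),
        ∀ i j : Fin 3, j ≤ i → ((P : Matrix (Fin 3) (Fin 3) k) * M * (↑P⁻¹ : Matrix (Fin 3) (Fin 3) k)) i j = 0 := by
  constructor
  · intro M hM
    obtain ⟨a, b, rfl⟩ := Submodule.mem_span_pair.mp hM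
    exact ⟨3, by rw [smul_add_smul_eq_fin_three, fin_three_pow_three_eq_zero]⟩
  · rintro ⟨P, hP⟩
    have hA : IsStrictUpperTriangular (_ * _ * _) :=
      hP _ (Submodule.subset_span (Set.mem_insert _ _))
    have hB : IsStrictUpperTriangular (_ * _ * _) :=
      hP _ (Submodule.subset_span (Set.mem_insert_of_mem _ rfl))
    have hnil := ((hA.mul hB).sub (hB.mul hA)).isNilpotent
    rw [Units.conj_mul_conj_sub, commutator_eq_diagonal] at hnil
    exact not_isNilpotent_one (isNilpotent_apply_of_isNilpotent_diagonal
      (P.isNilpotent_of_isNilpotent_conj hnil) 0)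

/-- Over an algebraically closed field `k` of characteristic 0, the
2-dimensional subspace `L = span{E₁₂ + E₂₃, E₂₁ - E₃₂}` of `sl₃(k)` consists of nilpotent
matrices, but no conjugate `P L P⁻¹` of `L` consists of strictly upper triangular
matrices. -/
theorem stmt_15 (k : Type*) [Field k] [IsAlgClosed k] [CharZero k] :
    (∀ M ∈ Submodule.span k
        ({single 0 1 (1 : k) + single 1 2 1,
          single 1 0 (1 : k) - single 2 1 1} :
          Set (Matrix (Fin 3) (Fin 3) k)), IsNilpotent M) ∧
    ¬ ∃ P : GL (Fin 3) k, ∀ M ∈ Submodule.span k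
        ({single 0 1 (1 : k) + single 1 2 1,
          single 1 0 (1 : k) - single 2 1 1} :
          Set (Matrix (Fin 3) (Fin 3) k)),
        ∀ i j : Fin 3, j ≤ i → ((P : Matrix (Fin 3) (Fin 3) k) * M * (↑P⁻¹ : Matrix (Fin 3) (Fin 3) k)) i j = 0 :=
  stmt_15_general k
end
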